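/- Under the Fibonacci renormalisation relations (as in the previous context) with the symmetry ν_{αβ}(−z) = ν_{βα}(z) and support condition ν_{αβ}(z) = 0 for z ∉ Λ − Λ (where (Λ−Λ) ∩ [0, τ+1] = {0, 1, τ, τ+1} and 1/τ, 2 ∉ Λ−Λ), the values at small arguments are uniquely determined by ν_aa(0): ν_ab(0) = ν_ba(0) = 0, ν_aa(1) = ν_ab(1) = ν_bb(1) = 0, ν_ba(1) = τ⁻¹ ν_aa(0), ν_aa(τ) = τ⁻² ν_aa(0), ν_ab(τ) = τ⁻¹ ν_aa(0), ν_ba(τ) = ν_bb(τ) = 0. -/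

import Mathlib

/-!
Each coefficient at `z` is `τ⁻¹` times coefficients at `z / τ` or `z / τ ± 1`, so it vanishes
when those points miss `Λ − Λ`. As `±(τ − 1)` and `±(2 − τ)` lie in `(−1, 0) ∪ (0, 1)`, which
`Λ − Λ` avoids, this kills every value at `0, 1, τ` except the loop `ν_aa(τ) = τ⁻¹ ν_ba(1)`,
`ν_ba(1) = τ⁻¹ (ν_aa(τ) + ν_ab(τ))` with `ν_ab(τ) = τ⁻¹ ν_aa(0)`: a linear equation for
`ν_aa(τ)`, solved using `τ² = τ + 1`.
-/

open Real Set

open scoped goldenRatio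

structure FibonacciCorrelation (τ : ℝ) (S : Set ℝ) (νaa νab νba νbb : ℝ → ℝ) : Prop where
  eq_zero_of_notMem : ∀ z, z ∉ S → νaa z = 0 ∧ νab z = 0 ∧ νba z = 0 ∧ νbb z = 0
  aa : ∀ z, νaa z = τ⁻¹ * (νaa (z / τ) + νab (z / τ) + νba (z / τ) + νbb (z / τ))
  ab : ∀ z, νab z = τ⁻¹ * (νaa (z / τ - 1) + νba (z / τ - 1))
  ba : ∀ z, νba z = τ⁻¹ * (νaa (z / τ + 1) + νab (z / τ + 1))
  bb : ∀ z, νbb z = τ⁻¹ * νaa (z / τ)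

theorem inv_goldenRatio_eq_sub_one : φ⁻¹ = φ - 1 := by
  rw [inv_goldenRatio, ← one_sub_goldenConj]
  ring

theorem one_div_goldenRatio : 1 / φ = φ - 1 := by
  rw [one_div, inv_goldenRatio_eq_sub_one]

theorem inv_goldenRatio_sq_add_inv : φ⁻¹ ^ 2 + φ⁻¹ = 1 := by
  rw [inv_goldenRatio_eq_sub_one]
  linear_combination goldenRatio_sq

theorem goldenRatio_sub_one_mem_Ioo : φ - 1 ∈ Ioo 0 1 :=
  ⟨by linarith [one_lt_goldenRatio], by linarith [goldenRatio_lt_two]⟩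

theorem two_sub_goldenRatio_mem_Ioo : 2 - φ ∈ Ioo 0 1 :=
  ⟨by linarith [goldenRatio_lt_two], by linarith [one_lt_goldenRatio]⟩

theorem eq_inv_sq_mul_of_eq_inv_sq_mul_add {τ x a : ℝ} (hτ : τ ^ 2 = τ + 1)
    (h : x = τ⁻¹ ^ 2 * (x + τ⁻¹ * a)) : x = τ⁻¹ ^ 2 * a := by
  have hτ0 : τ ≠ 0 := by rintro rfl; norm_num at hτ
  field_simp at h ⊢
  -- `τ ^ 3 - τ = τ ^ 2` turns `τ ^ 3 x = τ x + a` into `τ ^ 2 x = a`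
  linear_combination h - (τ * x) * hτ

theorem notMem_of_mem_Ioo_zero_one {τ : ℝ} {S : Set ℝ} (hτ : 1 ≤ τ)
    (hS : S ∩ Icc 0 (τ + 1) = ({0, 1, τ, τ + 1} : Set ℝ)) (hSsym : ∀ z, z ∈ S ↔ -z ∈ S)
    {x : ℝ} (hx : x ∈ Ioo 0 1) : x ∉ S ∧ -x ∉ S := by
  have hxS : x ∉ S := by
    intro hxS
    have hmem : x ∈ S ∩ Icc 0 (τ + 1) := ⟨hxS, hx.1.le, by linarith [hx.2]⟩
    rw [hS] at hmem
    simp only [mem_insert_iff, mem_singleton_iff] at hmem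
    rcases hmem with h | h | h | h <;> linarith [hx.1, hx.2]
  exact ⟨hxS, fun hneg => hxS ((hSsym x).2 hneg)⟩

namespace FibonacciCorrelation

variable {τ : ℝ} {S : Set ℝ} {νaa νab νba νbb : ℝ → ℝ}

theorem aa_eq_zero (h : FibonacciCorrelation τ S νaa νab νba νbb) {z : ℝ} (hz : z / τ ∉ S) :
    νaa z = 0 := by
  obtain ⟨haa, hab, hba, hbb⟩ := h.eq_zero_of_notMem _ hz
  rw [h.aa, haa, hab, hba, hbb]
  ring

theorem ab_eq_zero (h : FibonacciCorrelation τ S νaa νab νba νbb) {z : ℝ}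
    (hz : z / τ - 1 ∉ S) : νab z = 0 := by
  obtain ⟨haa, -, hba, -⟩ := h.eq_zero_of_notMem _ hz
  rw [h.ab, haa, hba]
  ring

theorem ba_eq_zero (h : FibonacciCorrelation τ S νaa νab νba νbb) {z : ℝ}
    (hz : z / τ + 1 ∉ S) : νba z = 0 := by
  obtain ⟨haa, hab, -, -⟩ := h.eq_zero_of_notMem _ hz
  rw [h.ba, haa, hab]
  ring

theorem bb_eq_zero (h : FibonacciCorrelation τ S νaa νab νba νbb) {z : ℝ} (hz : z / τ ∉ S) :
    νbb z = 0 := by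
  rw [h.bb, (h.eq_zero_of_notMem _ hz).1]
  ring

theorem aa_one (h : FibonacciCorrelation φ S νaa νab νba νbb)
    (hS : ∀ x ∈ Ioo 0 1, x ∉ S ∧ -x ∉ S) : νaa 1 = 0 :=
  h.aa_eq_zero <| by rw [one_div_goldenRatio]; exact (hS _ goldenRatio_sub_one_mem_Ioo).1

theorem bb_one (h : FibonacciCorrelation φ S νaa νab νba νbb)
    (hS : ∀ x ∈ Ioo 0 1, x ∉ S ∧ -x ∉ S) : νbb 1 = 0 :=
  h.bb_eq_zero <| by rw [one_div_goldenRatio]; exact (hS _ goldenRatio_sub_one_mem_Ioo).1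

theorem ab_one (h : FibonacciCorrelation φ S νaa νab νba νbb)
    (hS : ∀ x ∈ Ioo 0 1, x ∉ S ∧ -x ∉ S) : νab 1 = 0 :=
  h.ab_eq_zero <| by
    rw [one_div_goldenRatio, show φ - 1 - 1 = -(2 - φ) by ring]
    exact (hS _ two_sub_goldenRatio_mem_Ioo).2

theorem ab_zero (h : FibonacciCorrelation φ S νaa νab νba νbb)
    (hS : ∀ x ∈ Ioo 0 1, x ∉ S ∧ -x ∉ S) : νab 0 = 0 := by
  have haa : νaa (-1) = 0 := h.aa_eq_zero <| by
    rw [neg_div, one_div_goldenRatio]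
    exact (hS _ goldenRatio_sub_one_mem_Ioo).2
  have hba : νba (-1) = 0 := h.ba_eq_zero <| by
    rw [neg_div, one_div_goldenRatio, show -(φ - 1) + 1 = 2 - φ by ring]
    exact (hS _ two_sub_goldenRatio_mem_Ioo).1
  rw [h.ab, zero_div, zero_sub, haa, hba]
  ring

theorem ba_zero (h : FibonacciCorrelation φ S νaa νab νba νbb)
    (hS : ∀ x ∈ Ioo 0 1, x ∉ S ∧ -x ∉ S) : νba 0 = 0 := by
  rw [h.ba, zero_div, zero_add, h.aa_one hS, h.ab_one hS]
  ring

theorem bb_goldenRatio (h : FibonacciCorrelation φ S νaa νab νba νbb)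
    (hS : ∀ x ∈ Ioo 0 1, x ∉ S ∧ -x ∉ S) : νbb φ = 0 := by
  rw [h.bb, div_self goldenRatio_ne_zero, h.aa_one hS]
  ring

theorem ab_goldenRatio (h : FibonacciCorrelation φ S νaa νab νba νbb)
    (hS : ∀ x ∈ Ioo 0 1, x ∉ S ∧ -x ∉ S) : νab φ = φ⁻¹ * νaa 0 := by
  rw [h.ab, div_self goldenRatio_ne_zero, sub_self, h.ba_zero hS, add_zero]

theorem ba_goldenRatio (h : FibonacciCorrelation φ S νaa νab νba νbb) (h2 : (2 : ℝ) ∉ S) :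
    νba φ = 0 :=
  h.ba_eq_zero <| by rwa [div_self goldenRatio_ne_zero, one_add_one_eq_two]

theorem ba_one_eq (h : FibonacciCorrelation φ S νaa νab νba νbb) :
    νba 1 = φ⁻¹ * (νaa φ + νab φ) := by
  rw [h.ba, one_div_goldenRatio, sub_add_cancel]

theorem aa_goldenRatio (h : FibonacciCorrelation φ S νaa νab νba νbb)
    (hS : ∀ x ∈ Ioo 0 1, x ∉ S ∧ -x ∉ S) : νaa φ = φ⁻¹ ^ 2 * νaa 0 := by
  refine eq_inv_sq_mul_of_eq_inv_sq_mul_add goldenRatio_sq ?_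
  calc νaa φ = φ⁻¹ * νba 1 := by
        rw [h.aa, div_self goldenRatio_ne_zero, h.aa_one hS, h.ab_one hS, h.bb_one hS]
        ring
    _ = φ⁻¹ ^ 2 * (νaa φ + φ⁻¹ * νaa 0) := by
        rw [h.ba_one_eq, h.ab_goldenRatio hS]
        ring

theorem ba_one (h : FibonacciCorrelation φ S νaa νab νba νbb)
    (hS : ∀ x ∈ Ioo 0 1, x ∉ S ∧ -x ∉ S) : νba 1 = φ⁻¹ * νaa 0 := by
  rw [h.ba_one_eq, h.aa_goldenRatio hS, h.ab_goldenRatio hS]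
  linear_combination (φ⁻¹ * νaa 0) * inv_goldenRatio_sq_add_inv

end FibonacciCorrelation

theorem fibonacci_small_correlation_values_general
    (τ : ℝ) (hτ : τ = (1 + Real.sqrt 5) / 2)
    (νaa νab νba νbb : ℝ → ℝ) (S : Set ℝ)
    (hS : S ∩ Set.Icc 0 (τ + 1) = ({0, 1, τ, τ + 1} : Set ℝ))
    (hSsym : ∀ z : ℝ, z ∈ S ↔ -z ∈ S)
    (h2S : (2 : ℝ) ∉ S)
    (hsupp : ∀ z : ℝ, z ∉ S →
      νaa z = 0 ∧ νab z = 0 ∧ νba z = 0 ∧ νbb z = 0)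
    (haa : ∀ z : ℝ, νaa z = τ⁻¹ * (νaa (z / τ) + νab (z / τ) +
      νba (z / τ) + νbb (z / τ)))
    (hab : ∀ z : ℝ, νab z = τ⁻¹ * (νaa (z / τ - 1) + νba (z / τ - 1)))
    (hba : ∀ z : ℝ, νba z = τ⁻¹ * (νaa (z / τ + 1) + νab (z / τ + 1)))
    (hbb : ∀ z : ℝ, νbb z = τ⁻¹ * νaa (z / τ)) :
    νab 0 = 0 ∧ νba 0 = 0 ∧
    νaa 1 = 0 ∧ νab 1 = 0 ∧ νbb 1 = 0 ∧ νba 1 = τ⁻¹ * νaa 0 ∧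
    νaa τ = τ⁻¹ ^ 2 * νaa 0 ∧ νab τ = τ⁻¹ * νaa 0 ∧
    νba τ = 0 ∧ νbb τ = 0 := by
  subst hτ
  have h : FibonacciCorrelation φ S νaa νab νba νbb := ⟨hsupp, haa, hab, hba, hbb⟩
  have hgap : ∀ x ∈ Ioo 0 1, x ∉ S ∧ -x ∉ S := fun _ hx =>
    notMem_of_mem_Ioo_zero_one one_lt_goldenRatio.le hS hSsym hx
  exact ⟨h.ab_zero hgap, h.ba_zero hgap, h.aa_one hgap, h.ab_one hgap, h.bb_one hgap,
    h.ba_one hgap, h.aa_goldenRatio hgap, h.ab_goldenRatio hgap, h.ba_goldenRatio h2S,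
    h.bb_goldenRatio hgap⟩

/-- Fibonacci renormalisation: with the symmetry and support conditions for
the support set `S = Λ − Λ` (where `S ∩ [0, τ+1] = {0, 1, τ, τ+1}` and
`1/τ, 2 ∉ S`, `S` symmetric), the pair correlation coefficients at small
arguments are uniquely determined by `ν_aa(0)`:
`ν_ab(0) = ν_ba(0) = 0`, `ν_aa(1) = ν_ab(1) = ν_bb(1) = 0`,
`ν_ba(1) = τ⁻¹ ν_aa(0)`, `ν_aa(τ) = τ⁻² ν_aa(0)`, `ν_ab(τ) = τ⁻¹ ν_aa(0)`,
`ν_ba(τ) = ν_bb(τ) = 0`. Here `τ = (1+√5)/2`. -/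
theorem fibonacci_small_correlation_values
    (τ : ℝ) (hτ : τ = (1 + Real.sqrt 5) / 2)
    (νaa νab νba νbb : ℝ → ℝ) (S : Set ℝ)
    (hS : S ∩ Set.Icc 0 (τ + 1) = ({0, 1, τ, τ + 1} : Set ℝ))
    (hSsym : ∀ z : ℝ, z ∈ S ↔ -z ∈ S)
    (h2S : (2 : ℝ) ∉ S)
    (hsupp : ∀ z : ℝ, z ∉ S →
      νaa z = 0 ∧ νab z = 0 ∧ νba z = 0 ∧ νbb z = 0)
    (hsym : ∀ z : ℝ, νaa (-z) = νaa z ∧ νbb (-z) = νbb z ∧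
      νab (-z) = νba z ∧ νba (-z) = νab z)
    (haa : ∀ z : ℝ, νaa z = τ⁻¹ * (νaa (z / τ) + νab (z / τ) +
      νba (z / τ) + νbb (z / τ)))
    (hab : ∀ z : ℝ, νab z = τ⁻¹ * (νaa (z / τ - 1) + νba (z / τ - 1)))
    (hba : ∀ z : ℝ, νba z = τ⁻¹ * (νaa (z / τ + 1) + νab (z / τ + 1)))
    (hbb : ∀ z : ℝ, νbb z = τ⁻¹ * νaa (z / τ)) :
    νab 0 = 0 ∧ νba 0 = 0 ∧
    νaa 1 = 0 ∧ νab 1 = 0 ∧ νbb 1 = 0 ∧ νba 1 = τ⁻¹ * νaa 0 ∧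
    νaa τ = τ⁻¹ ^ 2 * νaa 0 ∧ νab τ = τ⁻¹ * νaa 0 ∧
    νba τ = 0 ∧ νbb τ = 0 :=
  fibonacci_small_correlation_values_general τ hτ νaa νab νba νbb S hS hSsym h2S hsupp haa hab hba
    hbb
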